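/- arXiv:1201.2734 — 6 statements merged into one kernel-verified Lean document; each statement's English description precedes it below -/
import Mathlib

section
/- Let $p$ be a prime and $n \geq 1$ a natural number. Then the $p$-adic valuation of the multinomial coefficient $(np)!/(n!)^p$ equals the sum of the base-$p$ digits of $n$; in particular $p$ divides $(np)!/(n!)^p$. -/
/-!
The multiples of `p` up to `np` are `p, 2p, …, np`, so `v_p((np)!) = v_p(n!) + n` and `v_p` of the
quotient is `n - (p - 1) v_p(n!)`. Legendre's formula `(p - 1) v_p(n!) = n - s_p(n)`
turns this into `s_p(n)`, which is positive as soon as `n ≠ 0`.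
-/

open Nat

theorem Nat.factorial_pow_dvd_factorial_mul (n k : ℕ) : n ! ^ k ∣ (n * k)! := by
  simpa [mul_comm] using prod_factorial_dvd_factorial_sum (Finset.range k) fun _ => n

theorem Nat.digits_sum_pos (b : ℕ) {n : ℕ} (hn : n ≠ 0) : 0 < (b.digits n).sum :=
  List.sum_pos_iff_exists_pos_nat.mpr ⟨_, List.getLast_mem (digits_ne_nil_iff_ne_zero.mpr hn),
    pos_of_ne_zero (getLast_digit_ne_zero b hn)⟩

theorem padicValNat_factorial_mul_div_factorial_pow {p : ℕ} [Fact p.Prime] (n : ℕ) :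
    padicValNat p ((n * p)! / n ! ^ p) = (p.digits n).sum := by
  have legendre := sub_one_mul_padicValNat_factorial (p := p) n
  have hsum_le := digit_sum_le p n
  have hp_mul : p * padicValNat p n ! = (p - 1) * padicValNat p n ! + padicValNat p n ! := by
    rw [Nat.sub_one_mul]
    have := Nat.le_mul_of_pos_left (padicValNat p n !) (Fact.out : p.Prime).pos
    omega
  rw [padicValNat.div_of_dvd (factorial_pow_dvd_factorial_mul n p),
    padicValNat.pow, mul_comm n, padicValNat_factorial_mul, hp_mul]
  omega

theorem padicValNat_central_multinomial (p n : ℕ) (hp : p.Prime) (hn : 1 ≤ n) :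
    padicValNat p ((n * p).factorial / n.factorial ^ p) = (Nat.digits p n).sum ∧
      p ∣ (n * p).factorial / n.factorial ^ p := by
  have : Fact p.Prime := ⟨hp⟩
  have hval := padicValNat_factorial_mul_div_factorial_pow (p := p) n
  refine ⟨hval, dvd_of_one_le_padicValNat ?_⟩
  rw [hval]
  exact digits_sum_pos p (by omega)
end

section
/- Let $p$ be a prime and $m \geq 0$. Then the multinomial coefficient $(p^m(p-1))!/((p^m)!)^{p-1}$ is congruent to $(p-1)!$ modulo $p$. -/
open Finset

lemma choose_pow_mul_modEq (p m j : ℕ) (hp : p.Prime) (hj : j < p) :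
    Nat.ModEq p ((p ^ m * j).choose (p ^ m)) j := by
  haveI : Fact p.Prime := ⟨hp⟩
  induction m with
  | zero => simpa using Nat.ModEq.refl j
  | succ m ih =>
    have h := Choose.choose_modEq_choose_mod_mul_choose_div_nat
      (p := p) (n := p ^ (m + 1) * j) (k := p ^ (m + 1))
    have hn : p ^ (m + 1) * j % p = 0 := by
      rw [pow_succ, mul_comm (p^m) p, mul_assoc]
      simp [Nat.mul_mod_right]
    have hk : p ^ (m + 1) % p = 0 := by
      rw [pow_succ]
      simp [Nat.mul_mod_left]
    have hn2 : p ^ (m + 1) * j / p = p ^ m * j := by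
      rw [pow_succ, mul_comm (p^m) p, mul_assoc, Nat.mul_div_cancel_left _ hp.pos]
    have hk2 : p ^ (m + 1) / p = p ^ m := by
      rw [pow_succ, Nat.mul_div_cancel _ hp.pos]
    rw [hn, hk, hn2, hk2, Nat.choose_self, one_mul] at h
    exact h.trans ih

lemma factorial_pow_mul (N k : ℕ) :
    (N * k).factorial = (N.factorial) ^ k * ∏ j ∈ Icc 1 k, (N * j).choose N := by
  induction k with
  | zero => simp
  | succ k ih =>
    have hle : N ≤ N * (k + 1) := Nat.le_mul_of_pos_right N (Nat.succ_pos k)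
    have hc := Nat.choose_mul_factorial_mul_factorial hle
    have hsub : N * (k + 1) - N = N * k := by ring_nf; omega
    rw [hsub] at hc
    have : ∏ j ∈ Icc 1 (k + 1), (N * j).choose N
        = (∏ j ∈ Icc 1 k, (N * j).choose N) * (N * (k + 1)).choose N := by
      rw [← Finset.Ico_add_one_right_eq_Icc, Finset.prod_Ico_succ_top (by omega), Finset.Ico_add_one_right_eq_Icc]
    rw [this, ← hc, ih]
    ring

theorem multinomial_pow_congr_factorial (p m : ℕ) (hp : p.Prime) :
    Nat.ModEq p ((p ^ m * (p - 1)).factorial / ((p ^ m).factorial) ^ (p - 1))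
      (p - 1).factorial := by
  have hfac := factorial_pow_mul (p ^ m) (p - 1)
  have hdiv : (p ^ m * (p - 1)).factorial / ((p ^ m).factorial) ^ (p - 1)
      = ∏ j ∈ Icc 1 (p - 1), (p ^ m * j).choose (p ^ m) := by
    rw [hfac, Nat.mul_div_cancel_left _ (pow_pos (Nat.factorial_pos _) _)]
  rw [hdiv, ← ZMod.natCast_eq_natCast_iff]
  push_cast
  have key : ∀ j ∈ Icc 1 (p - 1), (((p ^ m * j).choose (p ^ m) : ℕ) : ZMod p) = (j : ZMod p) := by
    intro j hj
    simp only [mem_Icc] at hj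
    exact (ZMod.natCast_eq_natCast_iff _ _ _).mpr
      (choose_pow_mul_modEq p m j hp (by omega))
  rw [Finset.prod_congr rfl key]
  have hfac2 : (∏ j ∈ Icc 1 (p - 1), j) = (p - 1).factorial := by
    rw [← Finset.prod_Ico_id_eq_factorial (p - 1), ← Finset.Ico_add_one_right_eq_Icc]
  rw [← hfac2]
  push_cast
  rfl
end

section
/- Let $p$ be a prime and let $m$ be a natural number with base-$p$ digits $m_0, m_1, \ldots, m_q$ (so $m = \sum_j m_j p^j$ with $0 \leq m_j < p$). Then the multinomial coefficient $m! / \prod_j ((p^j)!)^{m_j}$ is congruent to $\prod_j m_j!$ modulo $p$. -/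
/-!
Write `m = d + p * m'` with `d` the last digit. Splitting `(p ^ t * m)!` into `d` consecutive blocks
of length `p ^ t` on top of `(p ^ (t + 1) * m')!` produces `(p ^ t)! ^ d` times the binomial
coefficients `(p ^ (t + 1) * m' + i * p ^ t).choose (p ^ t)`, `1 ≤ i ≤ d`, and by Lucas' theorem
each of these is `≡ i [MOD p]`; so the cofactor is `≡ d! [MOD p]`, and induction on the digits
(with `t` increasing by one at each step) gives the theorem.
-/

open Finset Nat

theorem Nat.factorial_add_mul_eq_prod_choose_mul (n k s : ℕ) :
    (n + s * k)! = (∏ i ∈ range s, (n + (i + 1) * k).choose k) * k ! ^ s * n ! := by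
  induction s with
  | zero => simp
  | succ s ih =>
    rw [prod_range_succ, pow_succ, show n + (s + 1) * k = n + s * k + k by ring,
      ← add_choose_mul_factorial_mul_factorial (n + s * k) k, ih]
    ring

theorem Finset.prod_range_length_cons_getD {α M : Type*} [CommMonoid M] (f : ℕ → α → M)
    (a d : α) (L : List α) :
    ∏ j ∈ range (a :: L).length, f j ((a :: L).getD j d) =
      f 0 a * ∏ j ∈ range L.length, f (j + 1) (L.getD j d) := by
  rw [List.length_cons, prod_range_succ', mul_comm]
  simp only [List.getD_cons_succ, List.getD_cons_zero]

section Prime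

variable {p : ℕ} [Fact p.Prime]

theorem Nat.choose_prime_pow_modEq (t l i : ℕ) :
    (p ^ (t + 1) * l + i * p ^ t).choose (p ^ t) ≡ i [MOD p] := by
  have lucas := Choose.choose_pow_mul_pow_mul_modEq_choose_nat (p := p) (k := t) (a := p * l + i)
    (b := 1)
  rw [mul_one, choose_one_right] at lucas
  calc (p ^ (t + 1) * l + i * p ^ t).choose (p ^ t)
      = (p ^ t * (p * l + i)).choose (p ^ t) := by ring_nf
    _ ≡ p * l + i [MOD p] := lucas
    _ ≡ i [MOD p] := by simp [Nat.ModEq]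

theorem Nat.prod_range_choose_prime_pow_modEq_factorial (t l s : ℕ) :
    ∏ i ∈ range s, (p ^ (t + 1) * l + (i + 1) * p ^ t).choose (p ^ t) ≡ s ! [MOD p] := by
  rw [← prod_range_add_one_eq_factorial]
  exact ModEq.prod fun i _ => choose_prime_pow_modEq t l (i + 1)

theorem Nat.exists_factorial_pow_mul_ofDigits_eq (L : List ℕ) (t : ℕ) :
    ∃ g, (p ^ t * ofDigits p L)! = g * ∏ j ∈ range L.length, (p ^ (t + j))! ^ L.getD j 0 ∧
      g ≡ ∏ j ∈ range L.length, (L.getD j 0)! [MOD p] := by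
  induction L generalizing t with
  | nil => exact ⟨1, by simp, rfl⟩
  | cons d L ih =>
    obtain ⟨g, hg, hg_modEq⟩ := ih (t + 1)
    refine ⟨(∏ i ∈ range d, (p ^ (t + 1) * ofDigits p L + (i + 1) * p ^ t).choose (p ^ t)) * g,
      ?_, ?_⟩
    · have split : p ^ t * ofDigits p (d :: L) = p ^ (t + 1) * ofDigits p L + d * p ^ t := by
        rw [ofDigits_cons]; ring
      rw [split, factorial_add_mul_eq_prod_choose_mul, hg, prod_range_length_cons_getD]
      simp only [add_zero, ← add_assoc, add_right_comm t _ 1]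
      ring
    · rw [prod_range_length_cons_getD]
      exact (prod_range_choose_prime_pow_modEq_factorial t _ d).mul hg_modEq

end Prime

theorem multinomial_digits_congr (p m : ℕ) (hp : p.Prime) :
    Nat.ModEq p
      (m.factorial /
        ∏ j ∈ Finset.range (Nat.digits p m).length,
          ((p ^ j).factorial) ^ ((Nat.digits p m).getD j 0))
      (∏ j ∈ Finset.range (Nat.digits p m).length, ((Nat.digits p m).getD j 0).factorial) := by
  have := Fact.mk hp
  obtain ⟨g, hg, hg_modEq⟩ := exists_factorial_pow_mul_ofDigits_eq (p := p) (digits p m) 0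
  simp only [pow_zero, one_mul, zero_add, ofDigits_digits] at hg
  rwa [hg, Nat.mul_div_cancel g (prod_pos fun j _ => pow_pos (factorial_pos _) _)]
end

section
/- Let $R$ be a commutative ring of characteristic $p$ (a prime) and let $x \in R$ satisfy $x^p = 0$. Then the truncated exponential $E(x) = \sum_{i=0}^{p-1} x^i/i!$ satisfies $E(x)^p = 1$, i.e., $E(x)$ is $p$-unipotent. -/
/-!
Frobenius is additive in characteristic `p`, so `E(x) ^ p = ∑ (x ^ i / i!) ^ p`, and every term
with `i > 0` contains `(x ^ p) ^ i = 0`; only the constant term `1` survives.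
-/

/-- The truncated exponential `E(x) = ∑_{i=0}^{p-1} x^i / i!` in a commutative ring of
characteristic `p`, where the inverse factorials are taken in `ℤ/p` and mapped into `R`. -/
noncomputable def truncExp (p : ℕ) {R : Type*} [CommRing R] [CharP R p] (x : R) : R :=
  ∑ i ∈ Finset.range p, ZMod.castHom (dvd_refl p) R ((i.factorial : ZMod p)⁻¹) * x ^ i

open Finset in
theorem sum_mul_pow_pow_char_of_pow_char_eq_zero {R : Type*} [CommRing R] {p : ℕ}
    [Fact p.Prime] [CharP R p] {x : R} (hx : x ^ p = 0) {n : ℕ} (hn : 0 < n) (c : ℕ → R) :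
    (∑ i ∈ range n, c i * x ^ i) ^ p = c 0 ^ p := by
  rw [sum_pow_char, sum_eq_single_of_mem 0 (mem_range.mpr hn), pow_zero, mul_one]
  intro i _ hi
  rw [mul_pow, ← pow_mul, mul_comm i p, pow_mul, hx, zero_pow hi, mul_zero]

theorem truncExp_pow_char {p : ℕ} (hp : p.Prime) {R : Type*} [CommRing R] [CharP R p]
    (x : R) (hx : x ^ p = 0) :
    (truncExp p x) ^ p = 1 := by
  have : Fact p.Prime := ⟨hp⟩
  rw [truncExp, sum_mul_pow_pow_char_of_pow_char_eq_zero hx hp.pos]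
  simp
end

section
/- Let $R$ be a commutative ring of characteristic $p$ (a prime) and let $x \in R$ with $x^p = 0$. Define $E(x) = \sum_{i=0}^{p-1} x^i/i!$ and, for $u$ with $(u-1)^p = 0$, define $L(u) = \sum_{j=1}^{p-1} (-1)^{j+1}(u-1)^j/j$. Then $(E(x)-1)^p = 0$ and $L(E(x)) = x$. -/
/-- The truncated logarithm `L(u) = ∑_{j=1}^{p-1} (-1)^(j+1) (u-1)^j / j` in a commutative
ring of characteristic `p`, the inverses `1/j` being taken in `ℤ/p` and mapped into `R`. -/
noncomputable def truncLog (p : ℕ) {R : Type*} [CommRing R] [CharP R p] (u : R) : R :=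
  ∑ j ∈ Finset.Icc 1 (p - 1),
    (-1 : R) ^ (j + 1) * ZMod.castHom (dvd_refl p) R ((j : ZMod p)⁻¹) * (u - 1) ^ j

/-!
Both identities are polynomial identities over `ZMod p` evaluated at `x`, so it suffices to
prove them for `E = E(X)` in `(ZMod p)[X]` modulo `X ^ p`. The first holds because `E - 1` has
no constant term. For the second, `E' = E - X ^ (p - 1) / (p - 1)!`, and `L(E)' = G E'` with
`G = ∑_{k < p-1} (1 - E) ^ k`, which inverts `E` modulo `(1 - E) ^ (p - 1)`; hence
`L(E)' ≡ 1` modulo `X ^ (p - 1)`. As `1, …, p - 1` are nonzero in `ZMod p`, integrating this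
congruence termwise gives `L(E) ≡ X` modulo `X ^ p`.
-/

open Polynomial Finset

open scoped Nat

section Naturality

variable {p : ℕ} {R S : Type*} [CommRing R] [CommRing S] [CharP R p] [CharP S p]

lemma map_zmodCastHom (f : R →+* S) (c : ZMod p) :
    f (ZMod.castHom (dvd_refl p) R c) = ZMod.castHom (dvd_refl p) S c :=
  RingHom.congr_fun (RingHom.ext_zmod (f.comp (ZMod.castHom (dvd_refl p) R)) _) c

lemma map_truncExp (f : R →+* S) (x : R) : f (truncExp p x) = truncExp p (f x) := by
  simp only [truncExp, map_sum, map_mul, map_pow, map_zmodCastHom]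

lemma map_truncLog (f : R →+* S) (u : R) : f (truncLog p u) = truncLog p (f u) := by
  simp only [truncLog, map_sum, map_mul, map_pow, map_neg, map_one, map_sub, map_zmodCastHom]

end Naturality

lemma sub_one_dvd_truncLog {p : ℕ} {R : Type*} [CommRing R] [CharP R p] (u : R) :
    u - 1 ∣ truncLog p u :=
  dvd_sum fun j hj => dvd_mul_of_dvd_right (dvd_pow_self _ (by simp at hj; omega)) _

lemma X_pow_succ_dvd_of_X_pow_dvd_derivative {R : Type*} [Semiring R] [NoZeroDivisors R]
    {g : R[X]} {n : ℕ} (hn : ∀ k < n, (k + 1 : R) ≠ 0) (h0 : g.coeff 0 = 0)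
    (hd : X ^ n ∣ derivative g) : X ^ (n + 1) ∣ g := by
  rw [X_pow_dvd_iff] at hd ⊢
  rintro (_ | k) hk
  · exact h0
  · have h := coeff_derivative g k
    rw [hd k (by omega)] at h
    exact (mul_eq_zero.mp h.symm).resolve_right (hn k (by omega))

lemma ZMod.natCast_ne_zero_of_pos_of_lt {p n : ℕ} (h0 : 0 < n) (h : n < p) :
    (n : ZMod p) ≠ 0 :=
  (ZMod.natCast_eq_zero_iff n p).not.mpr (Nat.not_dvd_of_pos_of_lt h0 h)

section ZModPolynomial

variable (p : ℕ)

lemma truncExp_X :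
    truncExp p (X : (ZMod p)[X]) = ∑ i ∈ range p, C ((i ! : ZMod p)⁻¹) * X ^ i := by
  rw [truncExp, RingHom.ext_zmod (ZMod.castHom (dvd_refl p) (ZMod p)[X]) C]

lemma truncLog_eq_sum_range (q : (ZMod p)[X]) :
    truncLog p q =
      ∑ k ∈ range (p - 1), C ((-1) ^ k * ((k + 1 : ℕ) : ZMod p)⁻¹) * (q - 1) ^ (k + 1) := by
  have hIcc : Icc 1 (p - 1) = (range (p - 1)).map (addRightEmbedding 1) := by
    rw [range_eq_Ico, map_add_right_Ico, zero_add, ← Ico_add_one_right_eq_Icc]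
  rw [truncLog, RingHom.ext_zmod (ZMod.castHom (dvd_refl p) (ZMod p)[X]) C, hIcc, sum_map]
  refine sum_congr rfl fun k _ => ?_
  rw [addRightEmbedding_apply, C_mul, map_pow, map_neg, C_1]
  ring

variable [Fact p.Prime]

lemma X_dvd_truncExp_X_sub_one : X ∣ truncExp p (X : (ZMod p)[X]) - 1 := by
  simp [X_dvd_iff, truncExp_X, finsetSum_coeff, coeff_X_pow, (Fact.out : p.Prime).pos]

lemma inv_factorial_succ_mul {i : ℕ} (h : i + 1 < p) :
    ((i + 1)! : ZMod p)⁻¹ * (i + 1 : ℕ) = (i ! : ZMod p)⁻¹ := by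
  rw [Nat.factorial_succ, Nat.cast_mul, mul_inv, mul_right_comm,
    inv_mul_cancel₀ (ZMod.natCast_ne_zero_of_pos_of_lt i.succ_pos h), one_mul]

lemma derivative_truncExp_X :
    derivative (truncExp p (X : (ZMod p)[X])) =
      truncExp p X - C (((p - 1)! : ZMod p)⁻¹) * X ^ (p - 1) := by
  obtain ⟨n, rfl⟩ : ∃ n, p = n + 1 := ⟨p - 1, by have := (Fact.out : p.Prime).pos; omega⟩
  rw [truncExp_X, derivative_sum, sum_range_succ', sum_range_succ, Nat.add_sub_cancel]
  simp only [derivative_C_mul_X_pow, Nat.cast_zero, mul_zero, map_zero, zero_mul, add_zero,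
    Nat.add_sub_cancel, add_sub_cancel_right]
  refine sum_congr rfl fun i hi => ?_
  rw [inv_factorial_succ_mul _ (by simp at hi; omega)]

lemma derivative_truncLog (q : (ZMod p)[X]) :
    derivative (truncLog p q) = (∑ k ∈ range (p - 1), (1 - q) ^ k) * derivative q := by
  rw [truncLog_eq_sum_range, derivative_sum, sum_mul]
  refine sum_congr rfl fun k hk => ?_
  have hk : ((k + 1 : ℕ) : ZMod p) ≠ 0 :=
    ZMod.natCast_ne_zero_of_pos_of_lt k.succ_pos (by simp at hk; omega)
  have hcoeff :
      C ((-1) ^ k * ((k + 1 : ℕ) : ZMod p)⁻¹) * C ((k + 1 : ℕ) : ZMod p) = (-1) ^ k := by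
    rw [← C_mul, mul_assoc, inv_mul_cancel₀ hk, mul_one, map_pow, map_neg, C_1]
  rw [derivative_C_mul, derivative_pow, derivative_sub, derivative_one, sub_zero,
    Nat.add_sub_cancel, show 1 - q = -(q - 1) by ring, neg_pow (q - 1)]
  linear_combination (q - 1) ^ k * derivative q * hcoeff

lemma X_pow_dvd_derivative_truncLog_truncExp_X_sub_one :
    X ^ (p - 1) ∣ derivative (truncLog p (truncExp p (X : (ZMod p)[X]))) - 1 := by
  set E := truncExp p (X : (ZMod p)[X])
  set G := ∑ k ∈ range (p - 1), (1 - E) ^ k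
  have hEG : E * G = 1 - (1 - E) ^ (p - 1) := by
    simpa using mul_neg_geom_sum (1 - E) (p - 1)
  have hX : X ∣ 1 - E := by
    rw [← neg_sub]; exact dvd_neg.mpr (X_dvd_truncExp_X_sub_one p)
  rw [derivative_truncLog, derivative_truncExp_X,
    show G * (E - C (((p - 1)! : ZMod p)⁻¹) * X ^ (p - 1)) - 1 =
      -(1 - E) ^ (p - 1) - G * C (((p - 1)! : ZMod p)⁻¹) * X ^ (p - 1) by
      linear_combination hEG]
  exact dvd_sub (dvd_neg.mpr (pow_dvd_pow_of_dvd hX _)) (dvd_mul_left _ _)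

lemma X_pow_dvd_truncLog_truncExp_X_sub_X :
    X ^ p ∣ truncLog p (truncExp p (X : (ZMod p)[X])) - X := by
  obtain ⟨n, rfl⟩ : ∃ n, p = n + 1 := ⟨p - 1, by have := (Fact.out : p.Prime).pos; omega⟩
  refine X_pow_succ_dvd_of_X_pow_dvd_derivative (fun k hk => ?_) ?_ ?_
  · exact_mod_cast ZMod.natCast_ne_zero_of_pos_of_lt k.succ_pos (by omega : k + 1 < n + 1)
  · rw [← X_dvd_iff]
    exact dvd_sub ((X_dvd_truncExp_X_sub_one _).trans (sub_one_dvd_truncLog _)) dvd_rfl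
  · simpa [derivative_sub] using X_pow_dvd_derivative_truncLog_truncExp_X_sub_one (n + 1)

end ZModPolynomial

theorem truncLog_truncExp {p : ℕ} (hp : p.Prime) {R : Type*} [CommRing R] [CharP R p]
    (x : R) (hx : x ^ p = 0) :
    (truncExp p x - 1) ^ p = 0 ∧ truncLog p (truncExp p x) = x := by
  have : Fact p.Prime := ⟨hp⟩
  set ev := eval₂RingHom (ZMod.castHom (dvd_refl p) R) x
  have hev : ∀ q, X ^ p ∣ q → ev q = 0 := by
    rintro _ ⟨r, rfl⟩
    simp [ev, hx]
  have hX : ev X = x := eval₂_X _ _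
  have hE : ev (truncExp p X) = truncExp p x := by rw [map_truncExp, hX]
  constructor
  · simpa [hE] using hev _ (pow_dvd_pow_of_dvd (X_dvd_truncExp_X_sub_one p) p)
  · simpa [map_truncLog, hE, hX, sub_eq_zero] using
      hev _ (X_pow_dvd_truncLog_truncExp_X_sub_X p)
end

section
/- Let $k$ be a field of characteristic $p > 0$, $V$ a finite-dimensional $k$-vector space, and $x, y \in \mathrm{End}_k(V)$ commuting endomorphisms with $x^p = 0$ and $y^{p-1} = 0$. Then $V$ is free as a module over $k[u]/(u^p)$ with $u$ acting by $x$ if and only if $V$ is free as a module over $k[u]/(u^p)$ with $u$ acting by $x + y$. -/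
/-- Multiplication by `u` on the free module `(k[u]/(u^p))^d`, written in the basis
`u^0, …, u^{p-1}` of each of the `d` copies of `k[u]/(u^p)`: the coordinate shift operator. -/
noncomputable def shiftOp (k : Type*) [Field k] (p d : ℕ) :
    Module.End k (Fin d → Fin p → k) where
  toFun v := fun i j => if h : (j : ℕ) + 1 < p then v i ⟨(j : ℕ) + 1, h⟩ else 0
  map_add' u v := by funext i j; dsimp; split <;> simp
  map_smul' c v := by funext i j; dsimp; split <;> simp

/-- `V` is free as a module over `k[u]/(u^p)` with `u` acting by the endomorphism `x`:
there is a `k`-linear isomorphism of `V` with `(k[u]/(u^p))^d` carrying `x` to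
multiplication by `u`. -/
def IsFreeTruncated {k V : Type*} [Field k] [AddCommGroup V] [Module k V]
    (p : ℕ) (x : Module.End k V) : Prop :=
  ∃ (d : ℕ) (e : V ≃ₗ[k] (Fin d → Fin p → k)), ∀ v : V, e (x v) = shiftOp k p d (e v)

/-!
For `z` with `z ^ p = 0`, freeness over `k[u]/(u^p)` amounts to `ker z ≤ range (z ^ (p - 1))`:
then preimages under `z ^ (p - 1)` of a basis of `ker z` start Jordan chains of length `p`, which
are linearly independent and span `V` because `dim V ≤ p · dim (ker z)`.

Put `z = x + y` and `Q = ∑_{i < p - 1} x^i (-y)^(p-2-i)`. As `y ^ (p - 1) = 0`, the geometric sum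
gives `Q z = x^(p-1)`, and `binom(p-1, i) ≡ (-1)^i mod p` gives `x Q = z^(p-1)`. If `x` is free,
so that `ker x = range x^(p-1)` and `ker x^(p-1) = range x`, these identities show
`ker z ≤ x (ker z) + range z^(p-1)`; iterating, `x ^ p = 0` leaves `ker z ≤ range z^(p-1)`.
The converse is the same statement for `x = (x + y) + (-y)`.
-/

open Module LinearMap Finset

section Binomial
variable {R : Type*} [Ring R] {p : ℕ} {a b : R}

theorem Nat.Prime.cast_choose_pred (hp : p.Prime) (hR : (p : R) = 0) {m : ℕ} (hm : m < p) :
    ((p - 1).choose m : R) = (-1) ^ m := by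
  have h := congrArg (Int.cast : ℤ → R)
    (Int.alternating_sum_range_choose_eq_choose (n := p - 1) (m := m))
  rw [Nat.sub_add_cancel hp.one_le] at h
  push_cast at h
  rw [sum_eq_single 0 (fun k hk hk0 => ?_) (by simp)] at h
  · rw [pow_zero, Nat.choose_zero_right, Nat.cast_one, mul_one] at h
    calc ((p - 1).choose m : R) = (-1) ^ m * (-1) ^ m * (p - 1).choose m := by
          rw [← pow_add, Even.neg_one_pow ⟨m, rfl⟩, one_mul]
      _ = (-1) ^ m := by rw [mul_assoc, ← h, mul_one]
  · obtain ⟨q, hq⟩ := hp.dvd_choose_self hk0 (by have := mem_range.1 hk; omega)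
    rw [hq]; push_cast; rw [hR, zero_mul, mul_zero]

theorem Commute.sub_pow_prime_sub_one (hp : p.Prime) (hR : (p : R) = 0) (h : Commute a b) :
    (a - b) ^ (p - 1) = ∑ i ∈ range p, a ^ i * b ^ (p - 1 - i) := by
  rw [sub_eq_add_neg, h.neg_right.add_pow, Nat.sub_add_cancel hp.one_le]
  refine sum_congr rfl fun i hi => ?_
  have hi : i < p := mem_range.1 hi
  rw [← Nat.choose_symm (by omega), hp.cast_choose_pred hR (by omega), mul_assoc,
    ← (Commute.neg_one_right (-b)).mul_pow, mul_neg_one, neg_neg]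

theorem Commute.sub_pow_prime_sub_one_eq_mul (hp : p.Prime) (hR : (p : R) = 0) (h : Commute a b)
    (hb : b ^ (p - 1) = 0) :
    (a - b) ^ (p - 1) = a * ∑ i ∈ range (p - 1), a ^ i * b ^ (p - 1 - 1 - i) := by
  rw [h.sub_pow_prime_sub_one hp hR, ← Nat.sub_add_cancel hp.one_le, sum_range_succ', mul_sum]
  simp only [Nat.add_sub_cancel, pow_zero, one_mul, Nat.sub_zero, hb, add_zero]
  refine sum_congr rfl fun i _ => ?_
  rw [pow_succ', mul_assoc, show p - 1 - (i + 1) = p - 1 - 1 - i by omega]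

theorem Commute.add_pow_prime_eq_zero (hp : p.Prime) (hR : (p : R) = 0) (h : Commute a b)
    (ha : a ^ p = 0) (hb : b ^ (p - 1) = 0) : (a + b) ^ p = 0 := by
  rw [h.add_pow_prime_eq hp, ha, ← Nat.sub_add_cancel hp.one_le, pow_succ, hb,
    Nat.sub_add_cancel hp.one_le, hR]
  simp

end Binomial

section Nilpotent
variable {R M : Type*} [Ring R] [AddCommGroup M] [Module R M] {f : Module.End R M} {n : ℕ}

theorem Submodule.eq_bot_of_disjoint_ker_of_pow_eq_zero (hf : f ^ n = 0) {W : Submodule R M}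
    (hW : W ≤ W.comap f) (h : Disjoint W (ker f)) : W = ⊥ := by
  suffices ∀ m, ∀ w ∈ W, (f ^ m) w = 0 → w = 0 from
    (Submodule.eq_bot_iff W).2 fun w hw => this n w hw (by rw [hf, LinearMap.zero_apply])
  intro m
  induction m with
  | zero => simp
  | succ m ih =>
    intro w hw hfw
    have hw' : f w = 0 := ih (f w) (hW hw) (by rwa [← Module.End.mul_apply, ← pow_succ])
    exact Submodule.disjoint_def.1 h w hw hw'

theorem Submodule.le_of_le_map_sup_of_pow_eq_zero (hf : f ^ n = 0) {S T : Submodule R M}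
    (hS : S ≤ S.map f ⊔ T) (hT : T ≤ T.comap f) : S ≤ T := by
  suffices ∀ m, S ≤ S.map (f ^ m) ⊔ T by simpa [hf] using this n
  intro m
  induction m with
  | zero => simp [Module.End.one_eq_id]
  | succ m ih =>
    calc S ≤ S.map f ⊔ T := hS
      _ ≤ (S.map (f ^ m) ⊔ T).map f ⊔ T := sup_le_sup_right (Submodule.map_mono ih) _
      _ ≤ S.map (f ^ (m + 1)) ⊔ T := by
        rw [Submodule.map_sup, ← Submodule.map_comp, pow_succ', Module.End.mul_eq_comp]
        exact sup_le (sup_le_sup_left (Submodule.map_le_iff_le_comap.2 hT) _) le_sup_right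

end Nilpotent

section Rank
variable {K V : Type*} [DivisionRing K] [AddCommGroup V] [Module K V]

theorem rank_ker_pow_le (f : Module.End K V) (m : ℕ) :
    Module.rank K (ker (f ^ m)) ≤ m * Module.rank K (ker f) := by
  induction m with
  | zero => simp [Module.End.one_eq_id]
  | succ m ih =>
    have h := f.lift_rank_comap_le (ker (f ^ m))
    simp only [Cardinal.lift_id] at h
    rw [← ker_comp, ← Module.End.mul_eq_comp, ← pow_succ] at h
    calc Module.rank K (ker (f ^ (m + 1))) ≤ m * Module.rank K (ker f) + Module.rank K (ker f) :=
          h.trans (by gcongr)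
      _ = (m + 1 : ℕ) * Module.rank K (ker f) := by push_cast; ring

end Rank

section Shift
variable {k : Type*} [Field k] {p d : ℕ}

theorem shiftOp_apply (c : Fin d → Fin p → k) (i : Fin d) (j : Fin p) :
    shiftOp k p d c i j = if h : (j : ℕ) + 1 < p then c i ⟨j + 1, h⟩ else 0 := rfl

theorem shiftOp_pow_apply (m : ℕ) (c : Fin d → Fin p → k) (i : Fin d) (j : Fin p) :
    (shiftOp k p d ^ m) c i j = if h : (j : ℕ) + m < p then c i ⟨j + m, h⟩ else 0 := by
  induction m generalizing j with
  | zero => simp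
  | succ m ih =>
    rw [pow_succ', Module.End.mul_apply, shiftOp_apply]
    simp only [ih, add_assoc, add_comm 1 m]
    split_ifs <;> first | rfl | omega

theorem shiftOp_pow_self : shiftOp k p d ^ p = 0 := by
  ext c i j
  simp [shiftOp_pow_apply]

theorem apply_eq_zero_of_shiftOp_eq_zero {c : Fin d → Fin p → k} (hc : shiftOp k p d c = 0)
    (i : Fin d) {j : Fin p} (hj : (j : ℕ) ≠ 0) : c i j = 0 := by
  obtain ⟨_ | j, hjp⟩ := j
  · exact absurd rfl hj
  · simpa [shiftOp_apply, hjp] using congrFun (congrFun hc i) ⟨j, by omega⟩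

theorem ker_shiftOp_le_range_pow : ker (shiftOp k p d) ≤ range (shiftOp k p d ^ (p - 1)) := by
  intro c hc
  refine ⟨fun i j => if h : (j : ℕ) + 1 = p then c i ⟨0, by omega⟩ else 0,
    funext fun i => funext fun j => ?_⟩
  rw [shiftOp_pow_apply]
  split_ifs with h1 h2
  · exact congrArg (c i) (Fin.ext (by simp; omega))
  · simp only at h2; omega
  · exact (apply_eq_zero_of_shiftOp_eq_zero hc i (by omega)).symm

end Shift

section Chain
variable {k V : Type*} [Field k] [AddCommGroup V] [Module k V] {p d : ℕ}
  {z : Module.End k V} {v : Fin d → V}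

noncomputable def chainMap (z : Module.End k V) (p : ℕ) (v : Fin d → V) :
    (Fin d → Fin p → k) →ₗ[k] V where
  toFun c := ∑ i, ∑ j, c i j • (z ^ (p - 1 - j)) (v i)
  map_add' c c' := by simp only [Pi.add_apply, add_smul, sum_add_distrib]
  map_smul' a c := by simp only [Pi.smul_apply, smul_eq_mul, mul_smul, smul_sum, RingHom.id_apply]

theorem chainMap_apply (c : Fin d → Fin p → k) :
    chainMap z p v c = ∑ i, ∑ j, c i j • (z ^ (p - 1 - j)) (v i) := rfl

theorem chainMap_shiftOp (hz : z ^ p = 0) (c : Fin d → Fin p → k) :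
    chainMap z p v (shiftOp k p d c) = z (chainMap z p v c) := by
  rcases p with _ | n
  · simp [chainMap_apply]
  simp only [chainMap_apply, map_sum, map_smul, shiftOp_apply]
  refine sum_congr rfl fun i _ => ?_
  rw [Fin.sum_univ_castSucc, Fin.sum_univ_succ]
  simp only [Fin.val_castSucc, Fin.val_last, Fin.val_succ, Fin.val_zero, lt_irrefl, dif_neg,
    not_false_eq_true, zero_smul, add_zero, ← Module.End.mul_apply, ← pow_succ',
    Nat.add_sub_cancel, Nat.sub_zero, hz, LinearMap.zero_apply, smul_zero, zero_add,
    add_lt_add_iff_right, Fin.is_lt, dif_pos]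
  refine sum_congr rfl fun j _ => ?_
  rw [show n - (j + 1) + 1 = n - j by omega]
  rfl

theorem chainMap_injective (hz : z ^ p = 0)
    (hv : LinearIndependent k fun i => (z ^ (p - 1)) (v i)) :
    Function.Injective (chainMap z p v) := by
  rw [← ker_eq_bot]
  refine Submodule.eq_bot_of_disjoint_ker_of_pow_eq_zero shiftOp_pow_self
    (fun c hc => by rw [Submodule.mem_comap, mem_ker, chainMap_shiftOp hz, hc, map_zero]) ?_
  refine Submodule.disjoint_def.2 fun c hc hsc => ?_
  have hsupp (i : Fin d) (j : Fin p) (hj : (j : ℕ) ≠ 0) : c i j = 0 :=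
    apply_eq_zero_of_shiftOp_eq_zero hsc i hj
  funext i j
  by_cases hj : (j : ℕ) = 0
  · have h0 : ∑ i, c i j • (z ^ (p - 1)) (v i) = 0 := by
      rw [← mem_ker.1 hc, chainMap_apply]
      refine sum_congr rfl fun i _ => ?_
      rw [sum_eq_single j (fun j' _ hj' => ?_) (by simp), hj, Nat.sub_zero]
      rw [hsupp i j' fun h => hj' (Fin.ext (h.trans hj.symm)), zero_smul]
    exact Fintype.linearIndependent_iff.1 hv (fun i => c i j) h0 i
  · exact hsupp i j hj

end Chain

section Free
variable {k V : Type*} [Field k] [AddCommGroup V] [Module k V] {p : ℕ} {z : Module.End k V}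

theorem finrank_le_mul_finrank_ker [FiniteDimensional k V] (hz : z ^ p = 0) :
    finrank k V ≤ p * finrank k (ker z) := by
  have h := rank_ker_pow_le z p
  rw [hz, ker_zero, rank_top, ← finrank_eq_rank, ← finrank_eq_rank] at h
  exact_mod_cast h

theorem isFreeTruncated_of_ker_le_range_pow [FiniteDimensional k V] (hz : z ^ p = 0)
    (h : ker z ≤ range (z ^ (p - 1))) : IsFreeTruncated p z := by
  let u := Module.finBasis k (ker z)
  choose v hv using fun i => h (u i).2
  have hinj : Function.Injective (chainMap z p v) := by
    refine chainMap_injective hz ?_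
    simp_rw [hv]
    exact u.linearIndependent.map' _ (Submodule.ker_subtype _)
  have hdim : finrank k (Fin (finrank k (ker z)) → Fin p → k) = finrank k V := by
    refine le_antisymm (finrank_le_finrank_of_injective hinj) ?_
    simpa [Module.finrank_pi_fintype, mul_comm] using finrank_le_mul_finrank_ker hz
  let e := (linearEquivOfInjective _ hinj hdim).symm
  refine ⟨_, e, fun w => e.symm.injective ?_⟩
  calc e.symm (e (z w)) = z (e.symm (e w)) := by simp only [LinearEquiv.symm_apply_apply]
    _ = e.symm (shiftOp k p _ (e w)) := (chainMap_shiftOp hz _).symm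

theorem IsFreeTruncated.ker_le_range_pow (h : IsFreeTruncated p z) :
    ker z ≤ range (z ^ (p - 1)) := by
  obtain ⟨d, e, he⟩ := h
  have hpow := Module.End.commute_pow_left_of_commute (f := (e : V →ₗ[k] _)) (g := z)
    (g₂ := shiftOp k p d) (LinearMap.ext he).symm (p - 1)
  intro w hw
  obtain ⟨c, hc⟩ := ker_shiftOp_le_range_pow (show e w ∈ ker (shiftOp k p d) by
    rw [mem_ker, ← he, mem_ker.1 hw, map_zero])
  refine ⟨e.symm c, e.injective ?_⟩
  rw [← hc]
  simpa using (LinearMap.congr_fun hpow (e.symm c)).symm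

end Free

theorem Module.End.natCast_eq_zero_of_charP {k V : Type*} [Field k] [AddCommGroup V]
    [Module k V] (p : ℕ) [CharP k p] : (p : Module.End k V) = 0 := by
  rw [← map_natCast (algebraMap k (Module.End k V)), CharP.cast_eq_zero, map_zero]

section Kernel
variable {k V : Type*} [Field k] [AddCommGroup V] [Module k V] {p : ℕ}

theorem ker_pow_pred_le_range_of_ker_le_range_pow [FiniteDimensional k V] {z : Module.End k V}
    (hp : 0 < p) (hz : z ^ p = 0) (h : ker z ≤ range (z ^ (p - 1))) :
    ker (z ^ (p - 1)) ≤ range z := by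
  have hrange : range z ≤ ker (z ^ (p - 1)) := by
    rintro _ ⟨w, rfl⟩
    rw [mem_ker, ← Module.End.mul_apply, ← pow_succ, Nat.sub_add_cancel hp, hz,
      LinearMap.zero_apply]
  refine (Submodule.eq_of_le_of_finrank_le hrange ?_).ge
  have h1 := finrank_range_add_finrank_ker (z ^ (p - 1))
  have h2 := finrank_range_add_finrank_ker z
  have h3 := Submodule.finrank_mono h
  omega

theorem ker_add_le_range_pow [CharP k p] (hp : p.Prime) {x y : Module.End k V}
    (hxy : Commute x y) (hx : x ^ p = 0) (hy : y ^ (p - 1) = 0)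
    (hA : ker x ≤ range (x ^ (p - 1))) (hB : ker (x ^ (p - 1)) ≤ range x) :
    ker (x + y) ≤ range ((x + y) ^ (p - 1)) := by
  set z := x + y with hz
  have hR : (p : Module.End k V) = 0 := Module.End.natCast_eq_zero_of_charP p
  have hxny : Commute x (-y) := hxy.neg_right
  have hny : (-y) ^ (p - 1) = 0 := by rw [neg_pow, hy, mul_zero]
  set Q := ∑ i ∈ range (p - 1), x ^ i * (-y) ^ (p - 1 - 1 - i)
  have hxQ : x * Q = z ^ (p - 1) := by
    rw [← hxny.sub_pow_prime_sub_one_eq_mul hp hR hny, sub_neg_eq_add]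
  have hQz : Q * z = x ^ (p - 1) := by
    rw [hz, ← sub_neg_eq_add, hxny.geom_sum₂_mul, hny, sub_zero]
  have hzQ : z * Q = x ^ (p - 1) := by
    rw [hz, ← sub_neg_eq_add, hxny.mul_geom_sum₂, hny, sub_zero]
  have hxz : Commute x z := (Commute.refl x).add_right hxy
  refine Submodule.le_of_le_map_sup_of_pow_eq_zero hx (fun v hv => ?_) ?_
  · rw [mem_ker] at hv
    obtain ⟨w, rfl⟩ := hB (show (x ^ (p - 1)) v = 0 by
      rw [← hQz, Module.End.mul_apply, hv, map_zero])
    obtain ⟨s, hs⟩ := hA (show x (z w) = 0 by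
      rw [← Module.End.mul_apply, hxz.eq, Module.End.mul_apply, hv])
    refine Submodule.mem_sup.2
      ⟨x (w - Q s), ⟨w - Q s, ?_, rfl⟩, (z ^ (p - 1)) s, ⟨s, rfl⟩, ?_⟩
    · rw [SetLike.mem_coe, mem_ker, map_sub, ← Module.End.mul_apply z Q, hzQ, hs, sub_self]
    · rw [← hxQ, Module.End.mul_apply, ← map_add, sub_add_cancel]
  · rintro _ ⟨s, rfl⟩
    refine ⟨x s, ?_⟩
    rw [← Module.End.mul_apply, ← Module.End.mul_apply, (hxz.pow_right _).eq]

theorem IsFreeTruncated.add [FiniteDimensional k V] [CharP k p] (hp : p.Prime)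
    {x y : Module.End k V} (hxy : Commute x y) (hx : x ^ p = 0) (hy : y ^ (p - 1) = 0)
    (h : IsFreeTruncated p x) : IsFreeTruncated p (x + y) := by
  have hA := h.ker_le_range_pow
  have hB := ker_pow_pred_le_range_of_ker_le_range_pow hp.pos hx hA
  exact isFreeTruncated_of_ker_le_range_pow
    (hxy.add_pow_prime_eq_zero hp (Module.End.natCast_eq_zero_of_charP p) hx hy)
    (ker_add_le_range_pow hp hxy hx hy hA hB)

end Kernel

theorem isFreeTruncated_add_iff {k V : Type*} [Field k] {p : ℕ} [CharP k p] (hp : p.Prime)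
    [AddCommGroup V] [Module k V] [FiniteDimensional k V]
    (x y : Module.End k V) (hxy : Commute x y) (hx : x ^ p = 0) (hy : y ^ (p - 1) = 0) :
    IsFreeTruncated p x ↔ IsFreeTruncated p (x + y) := by
  refine ⟨IsFreeTruncated.add hp hxy hx hy, fun h => ?_⟩
  have hz : (x + y) ^ p = 0 :=
    hxy.add_pow_prime_eq_zero hp (Module.End.natCast_eq_zero_of_charP p) hx hy
  have hny : (-y) ^ (p - 1) = 0 := by rw [neg_pow, hy, mul_zero]
  simpa using h.add hp (hxy.add_left (Commute.refl y)).neg_right hz hny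
end
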